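/- The fractional Poisson bracket satisfies the Jacobi identity: for C² functions F₁, F₂, F₃ of (q, p_α, p_β), [F₁,[F₂,F₃]_FP]_FP + [F₂,[F₃,F₁]_FP]_FP + [F₃,[F₁,F₂]_FP]_FP = 0. -/

import Mathlib

/-!
`[F,G]_FP = D_v F · D_w G - D_v G · D_w F` for the constant vector fields `v = ∂_q` and
`w = ∂_{pα} + ∂_{pβ}`. For any two constant directions the cyclic sum of the nested brackets
reduces, by the product rule, to second-order terms that cancel in pairs once the mixed second
derivatives `D²F(v, w)` and `D²F(w, v)` are identified, which Schwarz's theorem allows for `C²`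
functions.
-/

open Real

/-- The fractional Poisson bracket of `F G : ℝ → ℝ → ℝ → ℝ` in variables `(q, pα, pβ)`:
`[F,G]_FP = (∂F/∂q)(∂G/∂pα + ∂G/∂pβ) - (∂G/∂q)(∂F/∂pα + ∂F/∂pβ)`. -/
noncomputable def FPB (F G : ℝ → ℝ → ℝ → ℝ) : ℝ → ℝ → ℝ → ℝ := fun q pa pb =>
  (deriv (fun x => F x pa pb) q) *
      (deriv (fun y => G q y pb) pa + deriv (fun z => G q pa z) pb)
    - (deriv (fun x => G x pa pb) q) *
      (deriv (fun y => F q y pb) pa + deriv (fun z => F q pa z) pb)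

section DirPoissonBracket

variable {𝕜 E : Type*} [RCLike 𝕜] [NormedAddCommGroup E] [NormedSpace 𝕜 E]

noncomputable def dirPoissonBracket (v w : E) (f g : E → 𝕜) : E → 𝕜 := fun x =>
  fderiv 𝕜 f x v * fderiv 𝕜 g x w - fderiv 𝕜 g x v * fderiv 𝕜 f x w

theorem dirPoissonBracket_apply (v w : E) (f g : E → 𝕜) (x : E) :
    dirPoissonBracket v w f g x =
      fderiv 𝕜 f x v * fderiv 𝕜 g x w - fderiv 𝕜 g x v * fderiv 𝕜 f x w :=
  rfl

theorem hasFDerivAt_fderiv_apply {f : E → 𝕜} {x : E} (hf : ContDiffAt 𝕜 2 f x) (v : E) :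
    HasFDerivAt (fun y => fderiv 𝕜 f y v) ((fderiv 𝕜 (fderiv 𝕜 f) x).flip v) x := by
  have hf' : DifferentiableAt 𝕜 (fderiv 𝕜 f) x :=
    (hf.fderiv_right (m := 1) (by norm_num)).differentiableAt (by norm_num)
  simpa using hf'.hasFDerivAt.clm_apply (hasFDerivAt_const v x)

theorem fderiv_dirPoissonBracket_apply {f g : E → 𝕜} {x : E} (hf : ContDiffAt 𝕜 2 f x)
    (hg : ContDiffAt 𝕜 2 g x) (v w u : E) :
    fderiv 𝕜 (dirPoissonBracket v w f g) x u =
      fderiv 𝕜 f x v * fderiv 𝕜 (fderiv 𝕜 g) x u w + fderiv 𝕜 g x w * fderiv 𝕜 (fderiv 𝕜 f) x u v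
        - (fderiv 𝕜 g x v * fderiv 𝕜 (fderiv 𝕜 f) x u w
          + fderiv 𝕜 f x w * fderiv 𝕜 (fderiv 𝕜 g) x u v) := by
  have h : HasFDerivAt (dirPoissonBracket v w f g) _ x :=
    ((hasFDerivAt_fderiv_apply hf v).mul (hasFDerivAt_fderiv_apply hg w)).sub
      ((hasFDerivAt_fderiv_apply hg v).mul (hasFDerivAt_fderiv_apply hf w))
  rw [h.fderiv]
  simp

theorem ContDiff.dirPoissonBracket {n : WithTop ℕ∞} {f g : E → 𝕜} (hf : ContDiff 𝕜 (n + 1) f)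
    (hg : ContDiff 𝕜 (n + 1) g) (v w : E) : ContDiff 𝕜 n (dirPoissonBracket v w f g) := by
  have hD : ∀ {h : E → 𝕜}, ContDiff 𝕜 (n + 1) h → ∀ u, ContDiff 𝕜 n (fun x => fderiv 𝕜 h x u) :=
    fun hh u => (hh.fderiv_right le_rfl).clm_apply contDiff_const
  exact ((hD hf v).mul (hD hg w)).sub ((hD hg v).mul (hD hf w))

theorem dirPoissonBracket_jacobi {f g h : E → 𝕜} {x : E} (hf : ContDiffAt 𝕜 2 f x)
    (hg : ContDiffAt 𝕜 2 g x) (hh : ContDiffAt 𝕜 2 h x) (v w : E) :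
    dirPoissonBracket v w f (dirPoissonBracket v w g h) x
        + dirPoissonBracket v w g (dirPoissonBracket v w h f) x
        + dirPoissonBracket v w h (dirPoissonBracket v w f g) x = 0 := by
  have hsymm : ∀ {k : E → 𝕜}, ContDiffAt 𝕜 2 k x →
      fderiv 𝕜 (fderiv 𝕜 k) x v w = fderiv 𝕜 (fderiv 𝕜 k) x w v :=
    fun hk => (hk.isSymmSndFDerivAt (by simp)).eq v w
  simp only [dirPoissonBracket_apply, fderiv_dirPoissonBracket_apply hf hg,
    fderiv_dirPoissonBracket_apply hg hh, fderiv_dirPoissonBracket_apply hh hf,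
    hsymm hf, hsymm hg, hsymm hh]
  ring

end DirPoissonBracket

def uncurry₃ {α β γ δ : Type*} (F : α → β → γ → δ) : α × β × γ → δ := fun p => F p.1 p.2.1 p.2.2

@[simp]
theorem uncurry₃_apply {α β γ δ : Type*} (F : α → β → γ → δ) (a : α) (b : β) (c : γ) :
    uncurry₃ F (a, b, c) = F a b c :=
  rfl

theorem deriv_partials_eq_fderiv {f : ℝ × ℝ × ℝ → ℝ} {q pa pb : ℝ}
    (hf : DifferentiableAt ℝ f (q, pa, pb)) :
    deriv (fun x => f (x, pa, pb)) q = fderiv ℝ f (q, pa, pb) (1, 0, 0)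
      ∧ deriv (fun y => f (q, y, pb)) pa = fderiv ℝ f (q, pa, pb) (0, 1, 0)
      ∧ deriv (fun z => f (q, pa, z)) pb = fderiv ℝ f (q, pa, pb) (0, 0, 1) :=
  ⟨(hf.hasFDerivAt.comp_hasDerivAt q ((hasDerivAt_id q).prodMk (hasDerivAt_const _ _))).deriv,
    (hf.hasFDerivAt.comp_hasDerivAt pa
      ((hasDerivAt_const _ _).prodMk ((hasDerivAt_id pa).prodMk (hasDerivAt_const _ _)))).deriv,
    (hf.hasFDerivAt.comp_hasDerivAt pb
      ((hasDerivAt_const _ _).prodMk ((hasDerivAt_const _ _).prodMk (hasDerivAt_id pb)))).deriv⟩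

theorem uncurry₃_FPB {F G : ℝ → ℝ → ℝ → ℝ} (hF : Differentiable ℝ (uncurry₃ F))
    (hG : Differentiable ℝ (uncurry₃ G)) :
    uncurry₃ (FPB F G) = dirPoissonBracket (1, 0, 0) (0, 1, 1) (uncurry₃ F) (uncurry₃ G) := by
  funext ⟨q, pa, pb⟩
  obtain ⟨hFq, hFa, hFb⟩ := deriv_partials_eq_fderiv (hF (q, pa, pb))
  obtain ⟨hGq, hGa, hGb⟩ := deriv_partials_eq_fderiv (hG (q, pa, pb))
  simp only [uncurry₃_apply] at hFq hFa hFb hGq hGa hGb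
  have hsplit : ((0 : ℝ), (1 : ℝ), (1 : ℝ)) = (0, 1, 0) + (0, 0, 1) := by simp
  rw [uncurry₃_apply, FPB, dirPoissonBracket_apply, hsplit, map_add, map_add,
    hFq, hFa, hFb, hGq, hGa, hGb]

theorem contDiff_uncurry₃_FPB {F G : ℝ → ℝ → ℝ → ℝ} (hF : ContDiff ℝ 2 (uncurry₃ F))
    (hG : ContDiff ℝ 2 (uncurry₃ G)) : ContDiff ℝ 1 (uncurry₃ (FPB F G)) := by
  rw [uncurry₃_FPB (hF.differentiable two_ne_zero) (hG.differentiable two_ne_zero)]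
  exact ContDiff.dirPoissonBracket (n := 1) hF hG _ _

/-- Jacobi identity for the fractional Poisson bracket. -/
theorem fpb_jacobi (F₁ F₂ F₃ : ℝ → ℝ → ℝ → ℝ)
    (hF₁ : ContDiff ℝ 2 (fun p : ℝ × ℝ × ℝ => F₁ p.1 p.2.1 p.2.2))
    (hF₂ : ContDiff ℝ 2 (fun p : ℝ × ℝ × ℝ => F₂ p.1 p.2.1 p.2.2))
    (hF₃ : ContDiff ℝ 2 (fun p : ℝ × ℝ × ℝ => F₃ p.1 p.2.1 p.2.2))
    (q pa pb : ℝ) :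
    FPB F₁ (FPB F₂ F₃) q pa pb + FPB F₂ (FPB F₃ F₁) q pa pb
      + FPB F₃ (FPB F₁ F₂) q pa pb = 0 := by
  have hd₁ : Differentiable ℝ (uncurry₃ F₁) := hF₁.differentiable two_ne_zero
  have hd₂ : Differentiable ℝ (uncurry₃ F₂) := hF₂.differentiable two_ne_zero
  have hd₃ : Differentiable ℝ (uncurry₃ F₃) := hF₃.differentiable two_ne_zero
  have hjacobi := dirPoissonBracket_jacobi (x := (q, pa, pb)) (f := uncurry₃ F₁)
    (g := uncurry₃ F₂) (h := uncurry₃ F₃) hF₁.contDiffAt hF₂.contDiffAt hF₃.contDiffAt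
    (1, 0, 0) (0, 1, 1)
  rw [← uncurry₃_FPB hd₂ hd₃, ← uncurry₃_FPB hd₃ hd₁, ← uncurry₃_FPB hd₁ hd₂,
    ← uncurry₃_FPB hd₁ ((contDiff_uncurry₃_FPB hF₂ hF₃).differentiable one_ne_zero),
    ← uncurry₃_FPB hd₂ ((contDiff_uncurry₃_FPB hF₃ hF₁).differentiable one_ne_zero),
    ← uncurry₃_FPB hd₃ ((contDiff_uncurry₃_FPB hF₁ hF₂).differentiable one_ne_zero)] at hjacobi
  exact hjacobi
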